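/- Let h = (h_n)_{n∈ℤ} be the unique fixed point of the contraction 𝒯 from the generalized Grobman–Hartman construction, and set H_n = Id + h_n. Then H_{n+1}(A_n x) = A_n H_n(x) + f_n(H_n(x)) for all n ∈ ℤ and x ∈ X; i.e., H_{n+1} ∘ A_n = (A_n + f_n) ∘ H_n. -/

import Mathlib

/-- Membership of a sequence of maps in the space `𝒴`. -/
def MemY {X : Type*} [NormedAddCommGroup X] [NormedSpace ℝ X]
    (A : ℤ → X ≃L[ℝ] X) (S U : ℤ → Submodule ℝ X) (h : ℤ → X → X) : Prop :=
  (∀ n, Continuous (h n)) ∧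
  (∀ n x, h n x ∈ S n ⊔ (U (n + 1)).map ((A n).symm.toLinearEquiv.toLinearMap)) ∧
  (∃ C, ∀ n x, ‖h n x‖ ≤ C)

/-!
The fixed point equation says that `h_n(x) = Σ_k G(n,k) g_{k-1}` is the Green-function sum of
the forcing `g_m = f_m(H_m(𝒜(m,n)x))` along the linear orbit of `x`, where
`G(n,k) = 𝒜(n,k)P_k` for `k ≤ n` and `G(n,k) = -𝒜(n,k)(Id - P_k)` for `k > n`; the dichotomy
estimates make these series absolutely convergent. Applying `A_n` to the sum at time `n` gives
the sum at time `n + 1` except for the term `k = n + 1`, whose two halves `P_{n+1} g_n` and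
`(Id - P_{n+1}) g_n` add up to `g_n`, so the sum solves `y_{n+1} = A_n y_n + g_n`. The orbit of
`A_n x` seen from time `n + 1` is the orbit of `x` seen from time `n`, so both fixed point
equations involve the same forcing, and `h_{n+1}(A_n x) = A_n h_n(x) + f_n(H_n x)`.
-/

open Real

theorem exp_neg_mul_le_exp_neg_pow {lam d : ℝ} (hlam : 0 ≤ lam) {k : ℕ} (hk : (k : ℝ) ≤ d) :
    exp (-lam * d) ≤ exp (-lam) ^ k := by
  rw [← exp_nat_mul]
  exact exp_le_exp.2 (by nlinarith)

theorem summable_apply_of_opNorm_le_geometric {𝕜 E F : Type*} [NontriviallyNormedField 𝕜]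
    [SeminormedAddCommGroup E] [NormedSpace 𝕜 E] [NormedAddCommGroup F] [NormedSpace 𝕜 F]
    [CompleteSpace F] {T : ℕ → E →L[𝕜] F} {w : ℕ → E} {C M r : ℝ} (hr₀ : 0 ≤ r) (hr : r < 1)
    (hT : ∀ k, ‖T k‖ ≤ C * r ^ k) (hw : ∀ k, ‖w k‖ ≤ M) :
    Summable fun k => T k (w k) := by
  have hM : 0 ≤ M := (norm_nonneg _).trans (hw 0)
  refine .of_norm_bounded ((summable_geometric_of_lt_one hr₀ hr).mul_left (C * M)) fun k => ?_
  calc ‖T k (w k)‖ ≤ ‖T k‖ * M := (T k).le_of_opNorm_le_of_le le_rfl (hw k)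
    _ ≤ C * r ^ k * M := mul_le_mul_of_nonneg_right (hT k) hM
    _ = C * M * r ^ k := by ring

section EvolutionFamily

variable {X : Type*} [NormedAddCommGroup X] [NormedSpace ℝ X]

theorem evolution_apply_succ (A : ℤ → X ≃L[ℝ] X) (𝒜 : ℤ → ℤ → X →L[ℝ] X)
    (hid : ∀ n, 𝒜 n n = ContinuousLinearMap.id ℝ X)
    (hco : ∀ m n, 𝒜 (m + 1) n = (A m : X →L[ℝ] X).comp (𝒜 m n)) (m n : ℤ) (x : X) :
    𝒜 m (n + 1) (A n x) = 𝒜 m n x := by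
  induction m using Int.inductionOn' with
  | b => exact n + 1
  | zero => simp [hid, hco n n]
  | succ k _ ih => simp [hco k, ih]
  | pred k _ ih =>
    have hpred : ∀ l, 𝒜 k l = (A (k - 1) : X →L[ℝ] X).comp (𝒜 (k - 1) l) := fun l => by
      simpa using hco (k - 1) l
    apply (A (k - 1)).injective
    simpa [hpred] using ih

variable (𝒜 : ℤ → ℤ → X →L[ℝ] X) (P : ℤ → X →L[ℝ] X)

noncomputable def stableSum (g : ℤ → X) (n : ℤ) : X :=
  ∑' k : ℕ, 𝒜 n (n - k) (P (n - k) (g (n - k - 1)))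

noncomputable def unstableSum (g : ℤ → X) (n : ℤ) : X :=
  ∑' k : ℕ, 𝒜 n (n + 1 + k) (g (n + k) - P (n + 1 + k) (g (n + k)))

noncomputable def greenSum (g : ℤ → X) (n : ℤ) : X :=
  stableSum 𝒜 P g n - unstableSum 𝒜 P g n

variable [CompleteSpace X] {D lam M : ℝ}

theorem summable_stable_apply (hD : 0 ≤ D) (hlam : 0 < lam)
    (hb1 : ∀ m n, n ≤ m → ‖(𝒜 m n).comp (P n)‖ ≤ D * exp (-lam * ((m : ℝ) - (n : ℝ))))
    {m l : ℤ} (hlm : l ≤ m) {w : ℕ → X} (hw : ∀ k, ‖w k‖ ≤ M) :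
    Summable fun k : ℕ => 𝒜 m (l - k) (P (l - k) (w k)) := by
  have hT (k : ℕ) : ‖(𝒜 m (l - k)).comp (P (l - k))‖ ≤ D * exp (-lam) ^ k := by
    refine (hb1 m (l - k) (by omega)).trans (mul_le_mul_of_nonneg_left ?_ hD)
    refine exp_neg_mul_le_exp_neg_pow hlam.le ?_
    push_cast
    linarith [(Int.cast_le (R := ℝ)).2 hlm]
  exact summable_apply_of_opNorm_le_geometric (T := fun k : ℕ => (𝒜 m (l - k)).comp (P (l - k)))
    (exp_nonneg _) (exp_lt_one_iff.2 (neg_lt_zero.2 hlam)) hT hw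

theorem summable_unstable_apply (hD : 0 ≤ D) (hlam : 0 < lam)
    (hb2 : ∀ m n, m ≤ n → ‖(𝒜 m n).comp (ContinuousLinearMap.id ℝ X - P n)‖ ≤
      D * exp (-lam * ((n : ℝ) - (m : ℝ))))
    {m l : ℤ} (hml : m ≤ l) {w : ℕ → X} (hw : ∀ k, ‖w k‖ ≤ M) :
    Summable fun k : ℕ => 𝒜 m (l + k) (w k - P (l + k) (w k)) := by
  have hT (k : ℕ) : ‖(𝒜 m (l + k)).comp (ContinuousLinearMap.id ℝ X - P (l + k))‖ ≤
      D * exp (-lam) ^ k := by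
    refine (hb2 m (l + k) (by omega)).trans (mul_le_mul_of_nonneg_left ?_ hD)
    refine exp_neg_mul_le_exp_neg_pow hlam.le ?_
    push_cast
    linarith [(Int.cast_le (R := ℝ)).2 hml]
  simpa using summable_apply_of_opNorm_le_geometric (exp_nonneg _)
    (exp_lt_one_iff.2 (neg_lt_zero.2 hlam)) hT hw

variable (A : ℤ → X ≃L[ℝ] X) (hid : ∀ n, 𝒜 n n = ContinuousLinearMap.id ℝ X)
    (hco : ∀ m n, 𝒜 (m + 1) n = (A m : X →L[ℝ] X).comp (𝒜 m n))
include hid hco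

theorem stableSum_succ (hD : 0 ≤ D) (hlam : 0 < lam)
    (hb1 : ∀ m n, n ≤ m → ‖(𝒜 m n).comp (P n)‖ ≤ D * exp (-lam * ((m : ℝ) - (n : ℝ))))
    {g : ℤ → X} (hg : ∀ m, ‖g m‖ ≤ M) (n : ℤ) :
    stableSum 𝒜 P g (n + 1) = P (n + 1) (g n) + A n (stableSum 𝒜 P g n) := by
  rw [stableSum, (summable_stable_apply 𝒜 P hD hlam hb1 le_rfl fun k => hg _).tsum_eq_zero_add,
    stableSum, ContinuousLinearEquiv.map_tsum]
  congr 1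
  · simp [hid]
  · refine tsum_congr fun k => ?_
    rw [show n + 1 - ((k + 1 : ℕ) : ℤ) = n - k by push_cast; ring, hco]
    rfl

theorem unstableSum_succ (hD : 0 ≤ D) (hlam : 0 < lam)
    (hb2 : ∀ m n, m ≤ n → ‖(𝒜 m n).comp (ContinuousLinearMap.id ℝ X - P n)‖ ≤
      D * exp (-lam * ((n : ℝ) - (m : ℝ))))
    {g : ℤ → X} (hg : ∀ m, ‖g m‖ ≤ M) (n : ℤ) :
    unstableSum 𝒜 P g (n + 1) = A n (unstableSum 𝒜 P g n) - (g n - P (n + 1) (g n)) := by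
  have hA (m : ℤ) (x : X) : A n (𝒜 n m x) = 𝒜 (n + 1) m x := by rw [hco]; rfl
  rw [eq_sub_iff_add_eq, unstableSum, unstableSum, ContinuousLinearEquiv.map_tsum]
  simp only [hA]
  have hsum := summable_unstable_apply 𝒜 P hD hlam hb2 (le_refl (n + 1)) fun k => hg (n + k)
  rw [hsum.tsum_eq_zero_add, add_comm]
  congr 1
  · simp [hid]
  · refine tsum_congr fun k => ?_
    rw [show n + 1 + ((k + 1 : ℕ) : ℤ) = n + 1 + 1 + k by push_cast; ring,
      show n + ((k + 1 : ℕ) : ℤ) = n + 1 + k by push_cast; ring]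

theorem greenSum_succ (hD : 0 ≤ D) (hlam : 0 < lam)
    (hb1 : ∀ m n, n ≤ m → ‖(𝒜 m n).comp (P n)‖ ≤ D * exp (-lam * ((m : ℝ) - (n : ℝ))))
    (hb2 : ∀ m n, m ≤ n → ‖(𝒜 m n).comp (ContinuousLinearMap.id ℝ X - P n)‖ ≤
      D * exp (-lam * ((n : ℝ) - (m : ℝ))))
    {g : ℤ → X} (hg : ∀ m, ‖g m‖ ≤ M) (n : ℤ) :
    greenSum 𝒜 P g (n + 1) = A n (greenSum 𝒜 P g n) + g n := by
  rw [greenSum, greenSum, stableSum_succ 𝒜 P A hid hco hD hlam hb1 hg,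
    unstableSum_succ 𝒜 P A hid hco hD hlam hb2 hg, map_sub]
  abel

end EvolutionFamily

theorem stmt_5_general
    {X : Type*} [NormedAddCommGroup X] [NormedSpace ℝ X] [CompleteSpace X]
    (A : ℤ → X ≃L[ℝ] X) (𝒜 : ℤ → ℤ → X →L[ℝ] X)
    (hid : ∀ n, 𝒜 n n = ContinuousLinearMap.id ℝ X)
    (hco : ∀ m n, 𝒜 (m + 1) n = (A m : X →L[ℝ] X).comp (𝒜 m n))
    (P : ℤ → X →L[ℝ] X)
    (D lam : ℝ) (hD : 0 < D) (hlam : 0 < lam)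
    (hb1 : ∀ m n, n ≤ m →
      ‖(𝒜 m n).comp (P n)‖ ≤ D * Real.exp (-lam * ((m : ℝ) - (n : ℝ))))
    (hb2 : ∀ m n, m ≤ n →
      ‖(𝒜 m n).comp (ContinuousLinearMap.id ℝ X - P n)‖ ≤
        D * Real.exp (-lam * ((n : ℝ) - (m : ℝ))))
    (f : ℤ → X → X) (M : ℝ)
    (hfbdd : ∀ n x, ‖f n x‖ ≤ M)
    (h : ℤ → X → X)
    -- h is a fixed point of the operator 𝒯
    (hfix : ∀ n x, h n x =
      (∑' k : ℕ, 𝒜 n (n - (k : ℤ))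
        (P (n - (k : ℤ))
          (f (n - (k : ℤ) - 1)
            (𝒜 (n - (k : ℤ) - 1) n x + h (n - (k : ℤ) - 1) (𝒜 (n - (k : ℤ) - 1) n x))))) -
      (∑' k : ℕ,
        𝒜 n (n + 1 + (k : ℤ))
          (f (n + (k : ℤ)) (𝒜 (n + (k : ℤ)) n x + h (n + (k : ℤ)) (𝒜 (n + (k : ℤ)) n x)) -
            P (n + 1 + (k : ℤ))
              (f (n + (k : ℤ)) (𝒜 (n + (k : ℤ)) n x + h (n + (k : ℤ)) (𝒜 (n + (k : ℤ)) n x)))))) :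
    -- H_{n+1} ∘ A_n = (A_n + f_n) ∘ H_n, where H_n = Id + h_n
    ∀ (n : ℤ) (x : X),
      A n x + h (n + 1) (A n x) = A n (x + h n x) + f n (x + h n x) := by
  intro n x
  set g : ℤ → X := fun m => f m (𝒜 m n x + h m (𝒜 m n x))
  have h_orbit : (fun m => f m (𝒜 m (n + 1) (A n x) + h m (𝒜 m (n + 1) (A n x)))) = g := by
    simp only [evolution_apply_succ A 𝒜 hid hco]
    rfl
  have h_at : h n x = greenSum 𝒜 P g n := hfix n x
  have h_succ : h (n + 1) (A n x) = greenSum 𝒜 P g (n + 1) := by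
    rw [hfix, ← h_orbit]
    rfl
  rw [h_succ, greenSum_succ 𝒜 P A hid hco hD.le hlam hb1 hb2 (fun m => hfbdd _ _), ← h_at, hid,
    ContinuousLinearMap.id_apply, map_add, add_assoc]

theorem stmt_5
    {X : Type*} [NormedAddCommGroup X] [NormedSpace ℝ X] [CompleteSpace X]
    (A : ℤ → X ≃L[ℝ] X) (𝒜 : ℤ → ℤ → X →L[ℝ] X)
    (hid : ∀ n, 𝒜 n n = ContinuousLinearMap.id ℝ X)
    (hco : ∀ m n, 𝒜 (m + 1) n = (A m : X →L[ℝ] X).comp (𝒜 m n))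
    (S U : ℤ → Submodule ℝ X)
    (hScl : ∀ n, IsClosed (S n : Set X)) (hUcl : ∀ n, IsClosed (U n : Set X))
    (hcompl : ∀ n, IsCompl (S n) (U n))
    (hSinv : ∀ n, ∀ x ∈ S n, A n x ∈ S (n + 1))
    (hUinv : ∀ n, ∀ x ∈ U (n + 1), (A n).symm x ∈ U n)
    (P : ℤ → X →L[ℝ] X)
    (hPran : ∀ n x, P n x ∈ S n)
    (hPS : ∀ n, ∀ x ∈ S n, P n x = x)
    (hPU : ∀ n, ∀ x ∈ U n, P n x = 0)
    (D lam : ℝ) (hD : 0 < D) (hlam : 0 < lam)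
    (hb1 : ∀ m n, n ≤ m →
      ‖(𝒜 m n).comp (P n)‖ ≤ D * Real.exp (-lam * ((m : ℝ) - (n : ℝ))))
    (hb2 : ∀ m n, m ≤ n →
      ‖(𝒜 m n).comp (ContinuousLinearMap.id ℝ X - P n)‖ ≤
        D * Real.exp (-lam * ((n : ℝ) - (m : ℝ))))
    (f : ℤ → X → X) (c M : ℝ) (hc : 0 ≤ c)
    (hflip : ∀ n x y, ‖f n x - f n y‖ ≤ c * ‖x - y‖)
    (hfbdd : ∀ n x, ‖f n x‖ ≤ M)
    (hsmall : c * D * (1 + Real.exp (-lam)) / (1 - Real.exp (-lam)) < 1)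
    (h : ℤ → X → X) (hmem : MemY A S U h)
    -- h is a fixed point of the operator 𝒯
    (hfix : ∀ n x, h n x =
      (∑' k : ℕ, 𝒜 n (n - (k : ℤ))
        (P (n - (k : ℤ))
          (f (n - (k : ℤ) - 1)
            (𝒜 (n - (k : ℤ) - 1) n x + h (n - (k : ℤ) - 1) (𝒜 (n - (k : ℤ) - 1) n x))))) -
      (∑' k : ℕ,
        𝒜 n (n + 1 + (k : ℤ))
          (f (n + (k : ℤ)) (𝒜 (n + (k : ℤ)) n x + h (n + (k : ℤ)) (𝒜 (n + (k : ℤ)) n x)) -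
            P (n + 1 + (k : ℤ))
              (f (n + (k : ℤ)) (𝒜 (n + (k : ℤ)) n x + h (n + (k : ℤ)) (𝒜 (n + (k : ℤ)) n x)))))) :
    -- H_{n+1} ∘ A_n = (A_n + f_n) ∘ H_n, where H_n = Id + h_n
    ∀ (n : ℤ) (x : X),
      A n x + h (n + 1) (A n x) = A n (x + h n x) + f n (x + h n x) :=
  stmt_5_general A 𝒜 hid hco P D lam hD hlam hb1 hb2 f M hfbdd h hfix
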